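/- The resolvent has a small singular value: if σ_k > 1 + ‖W₁‖ and I − W is invertible, then there exists a unit vector x ∈ ℝ^N such that ‖(I − W)⁻¹ x‖ ≤ 1/(σ_k − 1 − ‖W₁‖). -/

import Mathlib

/-! With `A = 1 - W`, the relation `W v_k = σ_k u_k + W₁ v_k` shows that `A` stretches the unit
vector `v_k` by at least `σ_k - 1 - ‖W₁‖`. Normalising `A v_k` gives the unit vector `x`, which is
the aligned input `x_a` up to sign, and `A⁻¹ x = v_k / ‖A v_k‖`. -/

open Matrix

/-- A vector of `ℝ^n` regarded as an element of Euclidean space, so that `‖euc x‖`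
is the Euclidean (`ℓ²`) norm of `x`. -/
noncomputable def euc {n : ℕ} (x : Fin n → ℝ) : EuclideanSpace ℝ (Fin n) := WithLp.toLp 2 x

noncomputable def l2OpNorm {n : ℕ} (M : Matrix (Fin n) (Fin n) ℝ) : ℝ :=
  ‖Matrix.toEuclideanCLM (𝕜 := ℝ) M‖

lemma norm_euc_mulVec_le {n : ℕ} (M : Matrix (Fin n) (Fin n) ℝ) (y : Fin n → ℝ) :
    ‖euc (M *ᵥ y)‖ ≤ l2OpNorm M * ‖euc y‖ :=
  (Matrix.toEuclideanCLM (𝕜 := ℝ) M).le_opNorm (euc y)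

lemma euc_smul {n : ℕ} (a : ℝ) (x : Fin n → ℝ) : euc (a • x) = a • euc x := rfl

lemma euc_sub {n : ℕ} (x y : Fin n → ℝ) : euc (x - y) = euc x - euc y := rfl

lemma norm_euc_col_eq_one {n : ℕ} {ι : Type*} [Fintype ι] [DecidableEq ι]
    {U : Matrix (Fin n) ι ℝ} (hU : Uᵀ * U = 1) (k : ι) : ‖euc (U.col k)‖ = 1 := by
  have hsq : ‖euc (U.col k)‖ ^ 2 = 1 := by
    have hkk := congrFun (congrFun hU k) k
    rw [mul_apply, one_apply_eq] at hkk
    rw [← real_inner_self_eq_norm_sq, euc, EuclideanSpace.inner_toLp_toLp, star_trivial]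
    exact hkk
  exact (pow_eq_one_iff_of_nonneg (norm_nonneg _) two_ne_zero).mp hsq

lemma transpose_mulVec_col {m ι R : Type*} [Fintype m] [Fintype ι] [DecidableEq ι]
    [CommSemiring R] {V : Matrix m ι R} (hV : Vᵀ * V = 1) (k : ι) :
    Vᵀ *ᵥ V.col k = Pi.single k 1 := by
  rw [← mulVec_single_one, mulVec_mulVec, hV, one_mulVec]

lemma mul_diagonal_mul_transpose_mulVec_col {m ι R : Type*} [Fintype m] [Fintype ι]
    [DecidableEq ι] [CommSemiring R] (U : Matrix m ι R) {V : Matrix m ι R} (hV : Vᵀ * V = 1)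
    (σ : ι → R) (k : ι) : (U * diagonal σ * Vᵀ) *ᵥ V.col k = σ k • U.col k := by
  rw [← mulVec_mulVec, transpose_mulVec_col hV, ← mulVec_mulVec, diagonal_mulVec_single,
    mul_one, mulVec_single]
  simp

lemma sub_le_norm_euc_one_sub_mulVec {n : ℕ} {W W₁ : Matrix (Fin n) (Fin n) ℝ}
    {u v : Fin n → ℝ} {s : ℝ} (hu : ‖euc u‖ = 1) (hv : ‖euc v‖ = 1)
    (hWv : W *ᵥ v = s • u + W₁ *ᵥ v) :
    s - 1 - l2OpNorm W₁ ≤ ‖euc ((1 - W) *ᵥ v)‖ := by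
  have hsplit : euc ((1 - W) *ᵥ v) = euc (v - W₁ *ᵥ v) - s • euc u := by
    rw [sub_mulVec, one_mulVec, hWv, ← euc_smul, ← euc_sub]
    congr 1
    abel
  have hrest : ‖euc (v - W₁ *ᵥ v)‖ ≤ 1 + l2OpNorm W₁ := by
    calc ‖euc (v - W₁ *ᵥ v)‖ ≤ ‖euc v‖ + ‖euc (W₁ *ᵥ v)‖ := by
          rw [euc_sub]; exact norm_sub_le _ _
      _ ≤ 1 + l2OpNorm W₁ := by
          have := norm_euc_mulVec_le W₁ v
          rw [hv, mul_one] at this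
          linarith
  have hsu : s ≤ ‖s • euc u‖ := by
    rw [norm_smul, hu, mul_one]
    exact Real.le_norm_self s
  rw [hsplit, norm_sub_rev]
  linarith [norm_sub_norm_le (s • euc u) (euc (v - W₁ *ᵥ v))]

lemma exists_norm_euc_eq_one_norm_inv_mulVec_le {n : ℕ} {A : Matrix (Fin n) (Fin n) ℝ}
    (hA : IsUnit A) {z : Fin n → ℝ} {c : ℝ} (hc : 0 < c) (hz : ‖euc z‖ = 1)
    (hAz : c ≤ ‖euc (A *ᵥ z)‖) :
    ∃ x : Fin n → ℝ, ‖euc x‖ = 1 ∧ ‖euc (A⁻¹ *ᵥ x)‖ ≤ 1 / c := by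
  have hpos : 0 < ‖euc (A *ᵥ z)‖ := hc.trans_le hAz
  refine ⟨‖euc (A *ᵥ z)‖⁻¹ • A *ᵥ z, ?_, ?_⟩
  · rw [euc_smul, norm_smul, norm_inv, norm_norm, inv_mul_cancel₀ hpos.ne']
  · rw [mulVec_smul, mulVec_mulVec, nonsing_inv_mul _ ((isUnit_iff_isUnit_det A).mp hA),
      one_mulVec, euc_smul, norm_smul, norm_inv, norm_norm, hz, mul_one, one_div]
    exact inv_anti₀ hc hAz

theorem resolvent_small_singular_value_general
    (N r : ℕ)
    (U V : Matrix (Fin N) (Fin r) ℝ)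
    (hU : Uᵀ * U = 1) (hV : Vᵀ * V = 1)
    (σ : Fin r → ℝ)
    (W₁ : Matrix (Fin N) (Fin N) ℝ)
    (W : Matrix (Fin N) (Fin N) ℝ)
    (hW : W = U * Matrix.diagonal σ * Vᵀ + W₁)
    (k : Fin r)
    (uk vk : Fin N → ℝ)
    (huk : uk = fun i => U i k) (hvk : vk = fun i => V i k)
    (hbig : σ k > 1 + l2OpNorm W₁)
    (hinv : IsUnit (1 - W)) :
    ∃ x : Fin N → ℝ, ‖euc x‖ = 1 ∧
      ‖euc ((1 - W)⁻¹.mulVec x)‖ ≤ 1 / (σ k - 1 - l2OpNorm W₁) := by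
  replace huk : uk = U.col k := huk
  replace hvk : vk = V.col k := hvk
  subst huk hvk
  have hWvk : W *ᵥ V.col k = σ k • U.col k + W₁ *ᵥ V.col k := by
    rw [hW, add_mulVec, mul_diagonal_mul_transpose_mulVec_col U hV σ k]
  have hstretch := sub_le_norm_euc_one_sub_mulVec (norm_euc_col_eq_one hU k)
    (norm_euc_col_eq_one hV k) hWvk
  exact exists_norm_euc_eq_one_norm_inv_mulVec_le hinv (by linarith)
    (norm_euc_col_eq_one hV k) hstretch

/-- The resolvent has a small singular value: if `σ_k > 1 + ‖W₁‖` and `I - W` is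
invertible, then there is a unit vector `x` with
`‖(I - W)⁻¹ x‖ ≤ 1/(σ_k - 1 - ‖W₁‖)`. -/
theorem resolvent_small_singular_value
    (N r : ℕ) (hr : 1 ≤ r) (hNr : r ≤ N)
    (U V : Matrix (Fin N) (Fin r) ℝ)
    (hU : Uᵀ * U = 1) (hV : Vᵀ * V = 1)
    (σ : Fin r → ℝ) (hσ : ∀ j, 0 < σ j)
    (W₁ : Matrix (Fin N) (Fin N) ℝ)
    (W : Matrix (Fin N) (Fin N) ℝ)
    (hW : W = U * Matrix.diagonal σ * Vᵀ + W₁)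
    (k : Fin r)
    (uk vk xa za : Fin N → ℝ)
    (huk : uk = fun i => U i k) (hvk : vk = fun i => V i k)
    (hxa : xa = uk + (σ k)⁻¹ • (W₁.mulVec vk - vk))
    (hza : za = -((σ k)⁻¹ • vk))
    (hbig : σ k > 1 + l2OpNorm W₁)
    (hinv : IsUnit (1 - W)) :
    ∃ x : Fin N → ℝ, ‖euc x‖ = 1 ∧
      ‖euc ((1 - W)⁻¹.mulVec x)‖ ≤ 1 / (σ k - 1 - l2OpNorm W₁) :=
  resolvent_small_singular_value_general N r U V hU hV σ W₁ W hW k uk vk huk hvk hbig hinv
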